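/- (Proposition 3: fixed-point convergence of GDC with architecture normalization.) Let f be ρ-strongly convex (i.e. u ↦ f(u) − (ρ/2)·‖u‖² is convex) with ρ > 0, with ∇f Lipschitz continuous with constant L > 0, and let φ be convex. Let T_G : E → E be Lipschitz with constant 1 + δ_g and T_D : E → E be Lipschitz with constant 1 + δ_d, where δ_g ≥ 0, δ_d ≥ 0, and assume (1 + δ_d)·(1 + δ_g)·|ρ − L| < ρ + L. Let γ be a real parameter with γ ≥ (ρ + L)/2 and √(1 − 2ρL/(γ·(ρ + L)))·(1 + δ_d)·(1 + δ_g) < 1, and let T_C : E → E be a map such that for every x ∈ E, T_C(x) minimizes over E the objective u ↦ φ(u) + (γ/2)·‖u − x + (1/γ)·∇f(x)‖². Then for any initial point u^0 ∈ E, the sequence defined by u^{t+1} = T_C(T_D(T_G(u^t))) converges to a point u* ∈ E which is the unique fixed point of the composed operator T_C ∘ T_D ∘ T_G. -/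

import Mathlib

/-!
The corrective operator is the proximal-gradient map `x ↦ prox_{φ/γ}(x - γ⁻¹ ∇f x)`.
The proximal map of a convex function is nonexpansive, because the prox objective is
`γ`-strongly convex and so grows quadratically away from its minimiser. For the gradient step,
Baillon–Haddad applied to the convex, `(L - ρ)`-smooth function `f - ρ/2 ‖·‖²` gives Nesterov's
inequality `‖∇f x - ∇f y‖² + ρL ‖x - y‖² ≤ (ρ + L) ⟪∇f x - ∇f y, x - y⟫`, and with
`γ ≥ (ρ + L)/2` this makes `x ↦ x - γ⁻¹ ∇f x` Lipschitz with constant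
`√(1 - 2ρL/(γ(ρ + L)))`. Hence `T_C ∘ T_D ∘ T_G` is a contraction of the complete space `E`,
and Banach's fixed-point theorem applies.
-/

open scoped RealInnerProductSpace Topology

open Set Filter AffineMap

theorem contractingWith_of_norm_sub_le {X : Type*} [NormedAddCommGroup X] {T : X → X} {K : ℝ}
    (hK : K < 1) (hT : ∀ x y, ‖T x - T y‖ ≤ K * ‖x - y‖) : ContractingWith K.toNNReal T := by
  refine ⟨Real.toNNReal_lt_one.2 hK, LipschitzWith.of_dist_le_mul fun x y => ?_⟩
  rw [dist_eq_norm, dist_eq_norm, Real.coe_toNNReal']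
  exact (hT x y).trans (by gcongr; exact le_max_left _ _)

section

variable {E : Type*} [NormedAddCommGroup E] [InnerProductSpace ℝ E] {F : E → ℝ} {gF : E → E}
  {g x : E}

theorem hasFDerivAt_half_mul_norm_sq (c : ℝ) (x : E) :
    HasFDerivAt (fun u : E => c / 2 * ‖u‖ ^ 2) (innerSL ℝ (c • x)) x := by
  refine ((hasStrictFDerivAt_norm_sq x).hasFDerivAt.const_mul (c / 2)).congr_fderiv ?_
  ext v
  simp only [smul_apply, coe_innerSL_apply, nsmul_eq_mul, Nat.cast_ofNat,
    smul_eq_mul, map_smul]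
  ring

theorem HasFDerivAt.hasDerivAt_comp_lineMap {y : E} {t : ℝ}
    (hF : HasFDerivAt F (innerSL ℝ g) (lineMap x y t)) :
    HasDerivAt (fun s : ℝ => F (lineMap x y s)) ⟪g, y - x⟫ t :=
  hF.comp_hasDerivAt t hasDerivAt_lineMap

theorem ConvexOn.add_inner_sub_le (hF : ConvexOn ℝ univ F)
    (hg : HasFDerivAt F (innerSL ℝ g) x) (y : E) : F x + ⟪g, y - x⟫ ≤ F y := by
  have hq : ConvexOn ℝ univ (fun s : ℝ => F (lineMap x y s)) := by
    have h := hF.comp_affineMap (lineMap x y)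
    rwa [preimage_univ] at h
  have hslope := hq.le_slope_of_hasDerivAt (mem_univ 0) (mem_univ 1) one_pos
    (HasFDerivAt.hasDerivAt_comp_lineMap (by simpa using hg))
  simp only [slope_def_field, lineMap_apply_zero, lineMap_apply_one] at hslope
  linarith

theorem ConvexOn.inner_gradient_sub_nonneg (hF : ConvexOn ℝ univ F) {y : E}
    (hx : HasFDerivAt F (innerSL ℝ (gF x)) x) (hy : HasFDerivAt F (innerSL ℝ (gF y)) y) :
    0 ≤ ⟪gF x - gF y, x - y⟫ := by
  have h₁ := hF.add_inner_sub_le hx y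
  have h₂ := hF.add_inner_sub_le hy x
  have : ⟪gF x, y - x⟫ = -⟪gF x, x - y⟫ := by rw [← inner_neg_right, neg_sub]
  rw [inner_sub_left]
  linarith

theorem convexOn_univ_of_inner_gradient_sub_nonneg
    (hF : ∀ x, HasFDerivAt F (innerSL ℝ (gF x)) x) (hmono : ∀ x y, 0 ≤ ⟪gF x - gF y, x - y⟫) :
    ConvexOn ℝ univ F := by
  refine ⟨convex_univ, fun x _ y _ a b ha hb hab => ?_⟩
  set q : ℝ → ℝ := fun t => F (lineMap y x t)
  have hder (t : ℝ) : HasDerivAt q ⟪gF (lineMap y x t), x - y⟫ t :=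
    (hF _).hasDerivAt_comp_lineMap
  have hmono_q : Monotone (deriv q) := by
    intro s t hst
    simp only [(hder _).deriv]
    rcases hst.eq_or_lt with rfl | hlt
    · rfl
    · have hdiff : lineMap y x t - lineMap y x s = (t - s) • (x - y) := by
        simp only [lineMap_apply_module', sub_smul]
        abel
      have key := hmono (lineMap y x t) (lineMap y x s)
      rw [hdiff, real_inner_smul_right, inner_sub_left] at key
      exact sub_nonneg.1 ((mul_nonneg_iff_of_pos_left (sub_pos.2 hlt)).1 key)
  have hq := (hmono_q.convexOn_univ_of_deriv fun t => (hder t).differentiableAt).2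
    (mem_univ 1) (mem_univ 0) ha hb hab
  have hb' : b = 1 - a := by linarith
  simpa [q, hb', lineMap_apply_module, add_comm] using hq

theorem HasFDerivAt.sub_half_mul_norm_sq (hF : HasFDerivAt F (innerSL ℝ g) x) (c : ℝ) :
    HasFDerivAt (fun u => F u - c / 2 * ‖u‖ ^ 2) (innerSL ℝ (g - c • x)) x := by
  rw [map_sub]
  exact hF.sub (hasFDerivAt_half_mul_norm_sq c x)

theorem HasFDerivAt.half_mul_norm_sq_sub (hF : HasFDerivAt F (innerSL ℝ g) x) (c : ℝ) :
    HasFDerivAt (fun u => c / 2 * ‖u‖ ^ 2 - F u) (innerSL ℝ (c • x - g)) x := by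
  rw [map_sub]
  exact (hasFDerivAt_half_mul_norm_sq c x).sub hF

theorem convexOn_half_mul_norm_sq_sub_of_lipschitz {L : ℝ}
    (hF : ∀ x, HasFDerivAt F (innerSL ℝ (gF x)) x)
    (hlip : ∀ x y, ‖gF x - gF y‖ ≤ L * ‖x - y‖) :
    ConvexOn ℝ univ (fun u => L / 2 * ‖u‖ ^ 2 - F u) := by
  refine convexOn_univ_of_inner_gradient_sub_nonneg (fun x => (hF x).half_mul_norm_sq_sub L)
    fun x y => ?_
  have hsplit : L • x - gF x - (L • y - gF y) = L • (x - y) - (gF x - gF y) := by module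
  rw [hsplit, inner_sub_left, real_inner_smul_left, real_inner_self_eq_norm_sq]
  nlinarith [real_inner_le_norm (gF x - gF y) (x - y), hlip x y, norm_nonneg (x - y)]

theorem ConvexOn.norm_sub_sq_le_bregman {c : ℝ} (hc : 0 < c)
    (hF : ∀ x, HasFDerivAt F (innerSL ℝ (gF x)) x) (hconv : ConvexOn ℝ univ F)
    (hsmooth : ConvexOn ℝ univ (fun u => c / 2 * ‖u‖ ^ 2 - F u)) (x y : E) :
    ‖gF y - gF x‖ ^ 2 / (2 * c) ≤ F y - F x - ⟪gF x, y - x⟫ := by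
  -- Baillon–Haddad: compare the supporting hyperplanes of `F` at `x` and of
  -- `c / 2 * ‖·‖ ^ 2 - F` at `y`, both evaluated at the point `z`.
  set D := gF y - gF x
  set z := y - c⁻¹ • D
  have h₁ := hconv.add_inner_sub_le (hF x) z
  have h₂ := hsmooth.add_inner_sub_le ((hF y).half_mul_norm_sq_sub c) z
  have e₁ : ⟪gF x, z - x⟫ = ⟪gF x, y - x⟫ - c⁻¹ * ⟪gF x, D⟫ := by
    rw [show z - x = (y - x) - c⁻¹ • D by simp only [z]; abel, inner_sub_right,
      real_inner_smul_right]
  have e₂ : ⟪c • y - gF y, z - y⟫ = -⟪y, D⟫ + c⁻¹ * ⟪gF y, D⟫ := by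
    rw [show z - y = -(c⁻¹ • D) by simp only [z]; abel, inner_neg_right, inner_sub_left,
      real_inner_smul_right, real_inner_smul_right, real_inner_smul_left]
    field_simp
    ring
  have e₃ : c / 2 * ‖z‖ ^ 2 = c / 2 * ‖y‖ ^ 2 - ⟪y, D⟫ + ‖D‖ ^ 2 / (2 * c) := by
    rw [norm_sub_sq_real, real_inner_smul_right, norm_smul, mul_pow, Real.norm_eq_abs, sq_abs]
    field_simp
  have e₄ : c⁻¹ * ⟪gF y, D⟫ - c⁻¹ * ⟪gF x, D⟫ = ‖D‖ ^ 2 / c := by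
    rw [← mul_sub, ← inner_sub_left, real_inner_self_eq_norm_sq, inv_mul_eq_div]
  rw [e₁] at h₁
  rw [e₂, e₃] at h₂
  have e₅ : ‖D‖ ^ 2 / c = ‖D‖ ^ 2 / (2 * c) + ‖D‖ ^ 2 / (2 * c) := by field_simp; ring
  linarith

theorem ConvexOn.norm_sub_sq_le_mul_inner {c : ℝ} (hc : 0 < c)
    (hF : ∀ x, HasFDerivAt F (innerSL ℝ (gF x)) x) (hconv : ConvexOn ℝ univ F)
    (hsmooth : ConvexOn ℝ univ (fun u => c / 2 * ‖u‖ ^ 2 - F u)) (x y : E) :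
    ‖gF x - gF y‖ ^ 2 ≤ c * ⟪gF x - gF y, x - y⟫ := by
  have h₁ := hconv.norm_sub_sq_le_bregman hc hF hsmooth x y
  have h₂ := hconv.norm_sub_sq_le_bregman hc hF hsmooth y x
  rw [norm_sub_rev] at h₁
  have e : ⟪gF x - gF y, x - y⟫ = -⟪gF x, y - x⟫ - ⟪gF y, x - y⟫ := by
    rw [inner_sub_left, ← inner_neg_right, neg_sub]
  have hc2 : ‖gF x - gF y‖ ^ 2 = c * (2 * (‖gF x - gF y‖ ^ 2 / (2 * c))) := by field_simp
  rw [e, hc2]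
  gcongr
  linarith

-- Nesterov, *Introductory Lectures on Convex Optimization*, Theorem 2.1.12.
theorem inner_gradient_sub_ge_of_strongConvex_of_lipschitz {ρ L : ℝ} (hρL : 0 ≤ ρ + L)
    (hF : ∀ x, HasFDerivAt F (innerSL ℝ (gF x)) x)
    (hsc : ConvexOn ℝ univ (fun u => F u - ρ / 2 * ‖u‖ ^ 2))
    (hlip : ∀ x y, ‖gF x - gF y‖ ≤ L * ‖x - y‖) (x y : E) :
    ‖gF x - gF y‖ ^ 2 + ρ * L * ‖x - y‖ ^ 2 ≤ (ρ + L) * ⟪gF x - gF y, x - y⟫ := by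
  have hF' (x : E) := (hF x).sub_half_mul_norm_sq ρ
  have hsplit : gF x - ρ • x - (gF y - ρ • y) = (gF x - gF y) - ρ • (x - y) := by module
  rcases le_or_gt L ρ with hLρ | hρL
  · have hmono := hsc.inner_gradient_sub_nonneg (gF := fun z => gF z - ρ • z) (hF' x) (hF' y)
    rw [hsplit, inner_sub_left, real_inner_smul_left, real_inner_self_eq_norm_sq] at hmono
    have hG : ‖gF x - gF y‖ ^ 2 ≤ (L * ‖x - y‖) ^ 2 :=
      pow_le_pow_left₀ (norm_nonneg _) (hlip x y) 2
    nlinarith [mul_nonneg hρL hmono,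
      mul_nonneg (mul_nonneg (sub_nonneg.2 hLρ) hρL) (sq_nonneg ‖x - y‖)]
  · -- `F - ρ / 2 * ‖·‖ ^ 2` is `(L - ρ)`-smooth, so Baillon–Haddad applies to it.
    have hsmooth : ConvexOn ℝ univ
        (fun u => (L - ρ) / 2 * ‖u‖ ^ 2 - (F u - ρ / 2 * ‖u‖ ^ 2)) := by
      convert convexOn_half_mul_norm_sq_sub_of_lipschitz hF hlip using 2
      ring
    have hcoco := hsc.norm_sub_sq_le_mul_inner (sub_pos.2 hρL) hF' hsmooth x y
    rw [hsplit] at hcoco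
    generalize gF x - gF y = G at hcoco ⊢
    generalize x - y = d at hcoco ⊢
    rw [norm_sub_sq_real, real_inner_smul_right, norm_smul, mul_pow, Real.norm_eq_abs, sq_abs,
      inner_sub_left, real_inner_smul_left, real_inner_self_eq_norm_sq] at hcoco
    nlinarith

theorem norm_gradient_step_sub_le {G : E → E} {ρ L γ : ℝ} (hρL : 0 < ρ + L)
    (hγ : γ ≥ (ρ + L) / 2)
    (hG : ∀ x y, ‖G x - G y‖ ^ 2 + ρ * L * ‖x - y‖ ^ 2 ≤ (ρ + L) * ⟪G x - G y, x - y⟫)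
    (x y : E) :
    ‖(x - (1 / γ) • G x) - (y - (1 / γ) • G y)‖ ≤ √(1 - 2 * ρ * L / (γ * (ρ + L))) * ‖x - y‖ := by
  have hγ₀ : 0 < γ := by linarith
  have hstep : γ • ((x - (1 / γ) • G x) - (y - (1 / γ) • G y)) = γ • (x - y) - (G x - G y) := by
    simp only [smul_sub, smul_smul, mul_one_div_cancel hγ₀.ne', one_smul]
    module
  have hD := hG x y
  generalize (x - (1 / γ) • G x) - (y - (1 / γ) • G y) = v at hstep ⊢
  generalize G x - G y = D at hstep hD
  generalize x - y = d at hstep hD ⊢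
  set a := 1 - 2 * ρ * L / (γ * (ρ + L))
  have hv : γ ^ 2 * ‖v‖ ^ 2 = γ ^ 2 * ‖d‖ ^ 2 - 2 * γ * ⟪D, d⟫ + ‖D‖ ^ 2 := by
    rw [← sq_abs γ, ← mul_pow, ← Real.norm_eq_abs, ← norm_smul, hstep, norm_sub_sq_real,
      norm_smul, mul_pow, Real.norm_eq_abs, sq_abs, real_inner_smul_left, real_inner_comm]
    ring
  have ha : (ρ + L) * (a * γ ^ 2) = (ρ + L) * γ ^ 2 - 2 * ρ * L * γ := by
    simp only [a]
    field_simp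
  have hsq : ‖v‖ ^ 2 ≤ a * ‖d‖ ^ 2 := by
    refine le_of_mul_le_mul_left ?_ (by positivity : 0 < (ρ + L) * γ ^ 2)
    have hrhs : (ρ + L) * γ ^ 2 * (a * ‖d‖ ^ 2) =
        ((ρ + L) * γ ^ 2 - 2 * ρ * L * γ) * ‖d‖ ^ 2 := by
      rw [← ha]; ring
    rw [hrhs, mul_assoc, hv]
    nlinarith [mul_le_mul_of_nonneg_left hD (by linarith : (0 : ℝ) ≤ 2 * γ),
      mul_le_mul_of_nonneg_right (by linarith : ρ + L ≤ 2 * γ) (sq_nonneg ‖D‖)]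
  calc ‖v‖ ≤ √(a * ‖d‖ ^ 2) := Real.le_sqrt_of_sq_le hsq
    _ = √a * ‖d‖ := by rw [Real.sqrt_mul' _ (sq_nonneg _), Real.sqrt_sq (norm_nonneg _)]

theorem StrongConvexOn.add_le_of_isMinOn {m : ℝ} {p : E}
    (hF : StrongConvexOn univ m F) (hp : IsMinOn F univ p) (w : E) :
    F p + m / 2 * ‖w - p‖ ^ 2 ≤ F w := by
  -- Compare `F p` with the value at `(1 - t) • p + t • w` and let `t → 0⁺`.
  have hgap : ∀ t ∈ Ioo (0 : ℝ) 1, (1 - t) * (m / 2 * ‖w - p‖ ^ 2) ≤ F w - F p := by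
    rintro t ⟨ht₀, ht₁⟩
    have hmin : F p ≤ F ((1 - t) • p + t • w) := isMinOn_univ_iff.1 hp _
    have hconv := hF.2 (mem_univ p) (mem_univ w) (sub_nonneg.2 ht₁.le) ht₀.le (by ring)
    rw [norm_sub_rev] at hconv
    simp only [smul_eq_mul] at hconv
    nlinarith
  have hlim : Tendsto (fun t : ℝ => (1 - t) * (m / 2 * ‖w - p‖ ^ 2)) (𝓝[>] 0)
      (𝓝 (m / 2 * ‖w - p‖ ^ 2)) := by
    have hc : Continuous fun t : ℝ => (1 - t) * (m / 2 * ‖w - p‖ ^ 2) := by fun_prop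
    simpa using (hc.tendsto 0).mono_left nhdsWithin_le_nhds
  have := le_of_tendsto hlim (mem_of_superset (Ioo_mem_nhdsGT one_pos) hgap)
  linarith

theorem ConvexOn.strongConvexOn_add_half_mul_norm_sub_sq {φ : E → ℝ} (hφ : ConvexOn ℝ univ φ)
    (γ : ℝ) (v : E) : StrongConvexOn univ γ (fun u => φ u + γ / 2 * ‖u - v‖ ^ 2) := by
  have hsplit : (fun u => φ u + γ / 2 * ‖u - v‖ ^ 2 - γ / 2 * ‖u‖ ^ 2) =
      fun u => φ u + (innerₛₗ ℝ (-(γ • v)) u + γ / 2 * ‖v‖ ^ 2) := by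
    funext u
    rw [innerₛₗ_apply_apply, norm_sub_sq_real, inner_neg_left, real_inner_smul_left,
      real_inner_comm u v]
    ring
  rw [strongConvexOn_iff_convex, hsplit]
  exact hφ.add (((innerₛₗ ℝ (-(γ • v))).convexOn convex_univ).add
    (convexOn_const (γ / 2 * ‖v‖ ^ 2) convex_univ))

theorem norm_sub_le_of_isMinOn_prox {φ : E → ℝ} {γ : ℝ} (hγ : 0 < γ) (hφ : ConvexOn ℝ univ φ)
    {v w p q : E} (hp : IsMinOn (fun u => φ u + γ / 2 * ‖u - v‖ ^ 2) univ p)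
    (hq : IsMinOn (fun u => φ u + γ / 2 * ‖u - w‖ ^ 2) univ q) : ‖p - q‖ ≤ ‖v - w‖ := by
  have hp' := (hφ.strongConvexOn_add_half_mul_norm_sub_sq γ v).add_le_of_isMinOn hp q
  have hq' := (hφ.strongConvexOn_add_half_mul_norm_sub_sq γ w).add_le_of_isMinOn hq p
  have hpol : ‖q - v‖ ^ 2 - ‖p - v‖ ^ 2 + ‖p - w‖ ^ 2 - ‖q - w‖ ^ 2 = 2 * ⟪p - q, v - w⟫ := by
    simp only [← real_inner_self_eq_norm_sq, inner_sub_left, inner_sub_right, real_inner_comm]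
    ring
  have hinner : ‖p - q‖ ^ 2 ≤ ⟪p - q, v - w⟫ := by
    rw [norm_sub_rev q p] at hp'
    nlinarith
  nlinarith [real_inner_le_norm (p - q) (v - w), norm_nonneg (p - q), norm_nonneg (v - w)]

end

theorem stmt17_general
    {E : Type*} [NormedAddCommGroup E] [InnerProductSpace ℝ E] [CompleteSpace E]
    (f : E → ℝ) (gradf : E → E)
    (hgrad : ∀ x : E, HasFDerivAt f (innerSL ℝ (gradf x)) x)
    (ρ L : ℝ) (hρ : 0 < ρ) (hL : 0 < L)
    (hsc : ConvexOn ℝ Set.univ (fun u : E => f u - (ρ / 2) * ‖u‖ ^ 2))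
    (hlip : ∀ x y : E, ‖gradf x - gradf y‖ ≤ L * ‖x - y‖)
    (φ : E → ℝ) (hφ : ConvexOn ℝ Set.univ φ)
    (δg δd : ℝ) (hδd : 0 ≤ δd)
    (TG TD : E → E)
    (hTG : ∀ x y : E, ‖TG x - TG y‖ ≤ (1 + δg) * ‖x - y‖)
    (hTD : ∀ x y : E, ‖TD x - TD y‖ ≤ (1 + δd) * ‖x - y‖)
    (γ : ℝ) (hγ : γ ≥ (ρ + L) / 2)
    (hcontr : Real.sqrt (1 - 2 * ρ * L / (γ * (ρ + L))) * (1 + δd) * (1 + δg) < 1)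
    (TC : E → E)
    (hTC : ∀ x : E, ∀ u : E,
      φ (TC x) + (γ / 2) * ‖TC x - x + (1 / γ) • gradf x‖ ^ 2 ≤
        φ u + (γ / 2) * ‖u - x + (1 / γ) • gradf x‖ ^ 2)
    (u : ℕ → E)
    (hrec : ∀ t : ℕ, u (t + 1) = TC (TD (TG (u t)))) :
    ∃ u_star : E, Filter.Tendsto u Filter.atTop (nhds u_star) ∧
      TC (TD (TG u_star)) = u_star ∧
      ∀ w : E, TC (TD (TG w)) = w → w = u_star := by
  have hρL : 0 < ρ + L := by linarith
  have hprox (x : E) : IsMinOn (fun u => φ u + γ / 2 * ‖u - (x - (1 / γ) • gradf x)‖ ^ 2)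
      univ (TC x) := by
    simpa only [isMinOn_univ_iff, sub_sub_eq_add_sub, add_sub_right_comm] using hTC x
  set k := √(1 - 2 * ρ * L / (γ * (ρ + L)))
  have hTC_lip (x y : E) : ‖TC x - TC y‖ ≤ k * ‖x - y‖ :=
    (norm_sub_le_of_isMinOn_prox (by linarith) hφ (hprox x) (hprox y)).trans
      (norm_gradient_step_sub_le hρL hγ
        (inner_gradient_sub_ge_of_strongConvex_of_lipschitz hρL.le hgrad hsc hlip) x y)
  have hT_lip (x y : E) :
      ‖TC (TD (TG x)) - TC (TD (TG y))‖ ≤ k * (1 + δd) * (1 + δg) * ‖x - y‖ := by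
    have : 0 ≤ 1 + δd := by linarith
    calc ‖TC (TD (TG x)) - TC (TD (TG y))‖ ≤ k * ‖TD (TG x) - TD (TG y)‖ := hTC_lip _ _
      _ ≤ k * ((1 + δd) * ‖TG x - TG y‖) := by gcongr; exact hTD _ _
      _ ≤ k * ((1 + δd) * ((1 + δg) * ‖x - y‖)) := by gcongr; exact hTG _ _
      _ = k * (1 + δd) * (1 + δg) * ‖x - y‖ := by ring
  have hT := contractingWith_of_norm_sub_le hcontr hT_lip
  have : Nonempty E := ⟨u 0⟩
  have hu : u = fun n => (fun x => TC (TD (TG x)))^[n] (u 0) := by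
    funext n
    induction n with
    | zero => rfl
    | succ n ih => rw [hrec, ih, Function.iterate_succ_apply']
  refine ⟨hT.fixedPoint, ?_, hT.fixedPoint_isFixedPt, fun w hw => hT.fixedPoint_unique hw⟩
  rw [hu]
  exact hT.tendsto_iterate_fixedPoint _

/-- Proposition 3: fixed-point convergence of GDC with
architecture normalization: under strong convexity of `f`, Lipschitz gradient,
convex `φ`, Lipschitz generative/discriminative operators, the compatibility
condition `(1+δ_d)(1+δ_g)|ρ−L| < ρ+L`, an admissible `γ`, and a corrective
operator `T_C` given by the proximal-gradient step, the iterates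
`u^{t+1} = T_C(T_D(T_G(u^t)))` converge to the unique fixed point of
`T_C ∘ T_D ∘ T_G`. -/
theorem stmt17
    {E : Type*} [NormedAddCommGroup E] [InnerProductSpace ℝ E] [CompleteSpace E]
    (f : E → ℝ) (gradf : E → E)
    (hgrad : ∀ x : E, HasFDerivAt f (innerSL ℝ (gradf x)) x)
    (ρ L : ℝ) (hρ : 0 < ρ) (hL : 0 < L)
    (hsc : ConvexOn ℝ Set.univ (fun u : E => f u - (ρ / 2) * ‖u‖ ^ 2))
    (hlip : ∀ x y : E, ‖gradf x - gradf y‖ ≤ L * ‖x - y‖)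
    (φ : E → ℝ) (hφ : ConvexOn ℝ Set.univ φ)
    (δg δd : ℝ) (hδg : 0 ≤ δg) (hδd : 0 ≤ δd)
    (TG TD : E → E)
    (hTG : ∀ x y : E, ‖TG x - TG y‖ ≤ (1 + δg) * ‖x - y‖)
    (hTD : ∀ x y : E, ‖TD x - TD y‖ ≤ (1 + δd) * ‖x - y‖)
    (hcompat : (1 + δd) * (1 + δg) * |ρ - L| < ρ + L)
    (γ : ℝ) (hγ : γ ≥ (ρ + L) / 2)
    (hcontr : Real.sqrt (1 - 2 * ρ * L / (γ * (ρ + L))) * (1 + δd) * (1 + δg) < 1)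
    (TC : E → E)
    (hTC : ∀ x : E, ∀ u : E,
      φ (TC x) + (γ / 2) * ‖TC x - x + (1 / γ) • gradf x‖ ^ 2 ≤
        φ u + (γ / 2) * ‖u - x + (1 / γ) • gradf x‖ ^ 2)
    (u0 : E) (u : ℕ → E) (hu0 : u 0 = u0)
    (hrec : ∀ t : ℕ, u (t + 1) = TC (TD (TG (u t)))) :
    ∃ u_star : E, Filter.Tendsto u Filter.atTop (nhds u_star) ∧
      TC (TD (TG u_star)) = u_star ∧
      ∀ w : E, TC (TD (TG w)) = w → w = u_star :=
  stmt17_general f gradf hgrad ρ L hρ hL hsc hlip φ hφ δg δd hδd TG TD hTG hTD γ hγ hcontr TC hTC u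
    hrec
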